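/- Let r : C1 → C2 be an F-linear exact (triangulated) functor between F-linear triangulated categories equipped with weight structures. Assume: (1) the weight structure on C1 is bounded; (2) the heart C_{1,w=0} is semi-primary and pseudo-Abelian; (3) r is weight exact; (4) the induced functor r_{w=0} on hearts is full; (5) r_{w=0} is conservative. Then for any M ∈ C1: M lies in the heart C_{1,w=0} if and only if r(M) lies in the heart C_{2,w=0}. -/

import Mathlib

open CategoryTheory CategoryTheory.Limits CategoryTheory.Pretriangulated

namespace Paper

/-- A morphism `f : X ⟶ Y` belongs to the radical of a preadditive category if,
for every `g : Y ⟶ X`, the endomorphism `𝟙 X - g ∘ f` is invertible. -/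
def InRadical {C : Type*} [Category C] [Preadditive C] {X Y : C} (f : X ⟶ Y) : Prop :=
  ∀ g : Y ⟶ X, IsIso (𝟙 X - f ≫ g)

/-- The Jacobson radical of a (possibly noncommutative) ring, as a two-sided ideal. -/
def ringRadical (R : Type*) [Ring R] : TwoSidedIdeal R :=
  TwoSidedIdeal.jacobson ⊥

/-- A ring is semi-primary if its (Jacobson) radical is nilpotent and the quotient by
the radical is a semisimple ring. -/
def IsSemiprimaryRing (R : Type*) [Ring R] : Prop :=
  IsSemisimpleRing (ringRadical R).ringCon.Quotient ∧
    ∃ n : ℕ, ∀ f : Fin n → R, (∀ i, f i ∈ ringRadical R) → (List.ofFn f).prod = 0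

/-- A class of objects of a preadditive category is semi-primary (André–Kahn) if the
endomorphism ring of each of its objects is a semi-primary ring; for an object `X`,
the radical ideal `rad(X,X)` is exactly the Jacobson radical of `End X`. -/
def SemiprimaryOn {C : Type*} [Category C] [Preadditive C] (P : Set C) : Prop :=
  ∀ X : C, X ∈ P → IsSemiprimaryRing (CategoryTheory.End X)

/-- A class of objects is pseudo-Abelian (idempotent complete) if every idempotent
endomorphism of one of its objects splits through an object of the class. -/
def PseudoAbelianOn {C : Type*} [Category C] [Preadditive C] (P : Set C) : Prop :=
  ∀ X : C, X ∈ P → ∀ e : X ⟶ X, e ≫ e = e →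
    ∃ (Y : C) (_ : Y ∈ P) (p : X ⟶ Y) (i : Y ⟶ X), p ≫ i = e ∧ i ≫ p = 𝟙 Y

variable (C : Type*) [Category C] [Preadditive C] [HasZeroObject C] [HasShift C ℤ]
  [∀ n : ℤ, (CategoryTheory.shiftFunctor C n).Additive] [Pretriangulated C]

/-- A weight structure on a pretriangulated category: classes `le = C_{w≤0}` and
`ge = C_{w≥0}`, additive (containing zero objects, closed under finite direct sums)
and closed under retracts, with `C_{w≤0} ⊆ C_{w≤1}`, `C_{w≥1} ⊆ C_{w≥0}`,
orthogonality, and existence of weight decompositions. -/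
structure WeightStructure where
  le : Set C
  ge : Set C
  le_retract : ∀ {X Y : C} (i : X ⟶ Y) (p : Y ⟶ X), i ≫ p = 𝟙 X → Y ∈ le → X ∈ le
  ge_retract : ∀ {X Y : C} (i : X ⟶ Y) (p : Y ⟶ X), i ≫ p = 𝟙 X → Y ∈ ge → X ∈ ge
  le_zero : ∀ X : C, IsZero X → X ∈ le
  ge_zero : ∀ X : C, IsZero X → X ∈ ge
  le_add : ∀ {X Y : C} (b : BinaryBicone X Y), b.IsBilimit → X ∈ le → Y ∈ le → b.pt ∈ le
  ge_add : ∀ {X Y : C} (b : BinaryBicone X Y), b.IsBilimit → X ∈ ge → Y ∈ ge → b.pt ∈ ge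
  le_shift : ∀ X : C, X ∈ le → X⟦(-1 : ℤ)⟧ ∈ le
  ge_shift : ∀ X : C, X ∈ ge → X⟦(1 : ℤ)⟧ ∈ ge
  orthogonal : ∀ {X Y : C}, X ∈ le → Y⟦(-1 : ℤ)⟧ ∈ ge → ∀ f : X ⟶ Y, f = 0
  exists_decomp : ∀ M : C, ∃ (A B : C) (f : A ⟶ M) (g : M ⟶ B) (h : B ⟶ A⟦(1 : ℤ)⟧),
    (Triangle.mk f g h ∈ distTriang C) ∧ A ∈ le ∧ B⟦(-1 : ℤ)⟧ ∈ ge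

namespace WeightStructure

variable {C} (w : WeightStructure C)

/-- `C_{w ≤ n} := C_{w ≤ 0}[n]`. -/
def leN (n : ℤ) : Set C := {X : C | X⟦-n⟧ ∈ w.le}

/-- `C_{w ≥ n} := C_{w ≥ 0}[n]`. -/
def geN (n : ℤ) : Set C := {X : C | X⟦-n⟧ ∈ w.ge}

/-- The heart `C_{w = 0} = C_{w ≤ 0} ∩ C_{w ≥ 0}`. -/
def heart : Set C := w.leN 0 ∩ w.geN 0

/-- The weight structure is bounded if every object lies in
`C_{w ≥ m} ∩ C_{w ≤ n}` for some integers `m ≤ n`. -/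
def Bounded : Prop := ∀ M : C, ∃ m n : ℤ, m ≤ n ∧ M ∈ w.geN m ∧ M ∈ w.leN n

end WeightStructure

/-- A weight filtration of `M` concentrated at `n`: an exact triangle
`M_{≤ n-1} ⟶ M ⟶ M_{≥ n} ⟶(δ) M_{≤ n-1}[1]` with the two outer terms in
`C_{w ≤ n-1}` and `C_{w ≥ n}` respectively. -/
def IsWeightFiltrationAt {C : Type*} [Category C] [Preadditive C] [HasZeroObject C]
    [HasShift C ℤ] [∀ n : ℤ, (CategoryTheory.shiftFunctor C n).Additive] [Pretriangulated C]
    (w : WeightStructure C) (n : ℤ) {A M B : C}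
    (f : A ⟶ M) (g : M ⟶ B) (δ : B ⟶ A⟦(1 : ℤ)⟧) : Prop :=
  (Triangle.mk f g δ ∈ distTriang C) ∧ A ∈ w.leN (n - 1) ∧ B ∈ w.geN n

/-- A minimal weight filtration concentrated at `n`: a weight filtration concentrated
at `n` whose connecting morphism lies in the radical. -/
def IsMinimalWeightFiltrationAt {C : Type*} [Category C] [Preadditive C] [HasZeroObject C]
    [HasShift C ℤ] [∀ n : ℤ, (CategoryTheory.shiftFunctor C n).Additive] [Pretriangulated C]
    (w : WeightStructure C) (n : ℤ) {A M B : C}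
    (f : A ⟶ M) (g : M ⟶ B) (δ : B ⟶ A⟦(1 : ℤ)⟧) : Prop :=
  IsWeightFiltrationAt w n f g δ ∧ InRadical δ

/-- `M` is without weights `α, α+1, …, β` if it admits a weight filtration avoiding
these weights. -/
def WithoutWeights {C : Type*} [Category C] [Preadditive C] [HasZeroObject C]
    [HasShift C ℤ] [∀ n : ℤ, (CategoryTheory.shiftFunctor C n).Additive] [Pretriangulated C]
    (w : WeightStructure C) (α β : ℤ) (M : C) : Prop :=
  ∃ (A B : C) (f : A ⟶ M) (g : M ⟶ B) (δ : B ⟶ A⟦(1 : ℤ)⟧),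
    (Triangle.mk f g δ ∈ distTriang C) ∧ A ∈ w.leN (α - 1) ∧ B ∈ w.geN (β + 1)

/-- A functor is weight exact if it respects both classes of the weight structures. -/
def WeightExact {C₁ : Type*} [Category C₁] [Preadditive C₁] [HasZeroObject C₁] [HasShift C₁ ℤ]
    [∀ n : ℤ, (CategoryTheory.shiftFunctor C₁ n).Additive] [Pretriangulated C₁]
    {C₂ : Type*} [Category C₂] [Preadditive C₂] [HasZeroObject C₂] [HasShift C₂ ℤ]
    [∀ n : ℤ, (CategoryTheory.shiftFunctor C₂ n).Additive] [Pretriangulated C₂]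
    (w₁ : WeightStructure C₁) (w₂ : WeightStructure C₂) (r : C₁ ⥤ C₂) : Prop :=
  (∀ X : C₁, X ∈ w₁.le → r.obj X ∈ w₂.le) ∧ (∀ X : C₁, X ∈ w₁.ge → r.obj X ∈ w₂.ge)

/-!
Suppose `r M` lies in the heart. By boundedness `M ∈ C_{w≤n}` for some `n`; if `n > 0`, take a
weight decomposition `A ⟶ M ⟶ B ⟶ A[1]` with `A ∈ C_{w≤n-1}` and `B ∈ C_{w=n}`. As `r M` has
weight `≤ 0`, `r` kills `M ⟶ B`, so `r δ` is a split monomorphism. Fullness of `r` on hearts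
extends to maps from `C_{w≤n}` into `C_{w=n}`, so the splitting lifts to `σ` with `r (δ ≫ σ) = 𝟙`;
conservativity makes `δ ≫ σ` invertible, hence `M ⟶ B` vanishes and `M` is a retract of
`A ∈ C_{w≤n-1}`. Descending induction gives `M ∈ C_{w≤0}`, and the dual argument `M ∈ C_{w≥0}`.
-/

lemma distinguished_of_iso_obj₂ {C : Type*} [Category C] [Preadditive C] [HasZeroObject C]
    [HasShift C ℤ] [∀ n : ℤ, (CategoryTheory.shiftFunctor C n).Additive] [Pretriangulated C]
    (T : Triangle C) (hT : T ∈ distTriang C) {M : C} (e : T.obj₂ ≅ M) :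
    Triangle.mk (T.mor₁ ≫ e.hom) (e.inv ≫ T.mor₂) T.mor₃ ∈ distTriang C := by
  refine isomorphic_distinguished T hT _
    (Triangle.isoMk _ T (Iso.refl _) e.symm (Iso.refl _) ?_ ?_ ?_) <;>
    dsimp only [Triangle.mk] <;> simp

namespace WeightStructure

variable {C : Type*} [Category C] [Preadditive C] [HasZeroObject C] [HasShift C ℤ]
  [∀ n : ℤ, (CategoryTheory.shiftFunctor C n).Additive] [Pretriangulated C]
  (w : WeightStructure C)

def heartAt (n : ℤ) : Set C := w.leN n ∩ w.geN n

lemma mem_le_of_iso {X Y : C} (e : X ≅ Y) (hY : Y ∈ w.le) : X ∈ w.le :=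
  w.le_retract e.hom e.inv e.hom_inv_id hY

lemma mem_ge_of_iso {X Y : C} (e : X ≅ Y) (hY : Y ∈ w.ge) : X ∈ w.ge :=
  w.ge_retract e.hom e.inv e.hom_inv_id hY

lemma mem_leN_of_retract {X Y : C} {k : ℤ} (i : X ⟶ Y) (p : Y ⟶ X) (h : i ≫ p = 𝟙 X)
    (hY : Y ∈ w.leN k) : X ∈ w.leN k :=
  w.le_retract (i⟦-k⟧') (p⟦-k⟧') 
    (by rw [← Functor.map_comp, h, CategoryTheory.Functor.map_id]) hY

lemma mem_geN_of_retract {X Y : C} {k : ℤ} (i : X ⟶ Y) (p : Y ⟶ X) (h : i ≫ p = 𝟙 X)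
    (hY : Y ∈ w.geN k) : X ∈ w.geN k :=
  w.ge_retract (i⟦-k⟧') (p⟦-k⟧') 
    (by rw [← Functor.map_comp, h, CategoryTheory.Functor.map_id]) hY

lemma shift_mem_leN {X : C} {k : ℤ} (a j : ℤ) (h : k + a = j) (hX : X ∈ w.leN k) :
    X⟦a⟧ ∈ w.leN j :=
  w.mem_le_of_iso ((shiftFunctorAdd' C a (-j) (-k) (by omega)).app X).symm hX

lemma shift_mem_geN {X : C} {k : ℤ} (a j : ℤ) (h : k + a = j) (hX : X ∈ w.geN k) :
    X⟦a⟧ ∈ w.geN j :=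
  w.mem_ge_of_iso ((shiftFunctorAdd' C a (-j) (-k) (by omega)).app X).symm hX

lemma shift_mem_heart {X : C} {n : ℤ} (hX : X ∈ w.heartAt n) : X⟦-n⟧ ∈ w.heart :=
  ⟨w.shift_mem_leN (-n) 0 (by omega) hX.1, w.shift_mem_geN (-n) 0 (by omega) hX.2⟩

lemma leN_mono {X : C} {k j : ℤ} (h : k ≤ j) (hX : X ∈ w.leN k) : X ∈ w.leN j := by
  induction j, h using Int.leInduction with
  | base => exact hX
  | succ j _ ih =>
    exact w.mem_le_of_iso ((shiftFunctorAdd' C (-j) (-1) (-(j + 1)) (by omega)).app X)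
      (w.le_shift _ ih)

lemma geN_anti {X : C} {k j : ℤ} (h : k ≤ j) (hX : X ∈ w.geN j) : X ∈ w.geN k := by
  induction k, h using Int.leInductionDown with
  | base => exact hX
  | pred k _ ih =>
    exact w.mem_ge_of_iso ((shiftFunctorAdd' C (-k) 1 (-(k - 1)) (by omega)).app X)
      (w.ge_shift _ ih)

lemma hom_eq_zero_of_leN_of_geN {X Y : C} {k j : ℤ} (h : k < j) (hX : X ∈ w.leN k)
    (hY : Y ∈ w.geN j) (f : X ⟶ Y) : f = 0 := by
  have hY' : Y⟦-k⟧⟦(-1 : ℤ)⟧ ∈ w.ge :=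
    w.mem_ge_of_iso ((shiftFunctorAdd' C (-k) (-1) (-(k + 1)) (by omega)).app Y).symm
      (w.geN_anti (by omega) hY)
  exact (shiftFunctor C (-k)).map_injective
    (by rw [w.orthogonal hX hY' (f⟦-k⟧'), Functor.map_zero])

lemma exists_isWeightFiltrationAt (M : C) (n : ℤ) :
    ∃ (A B : C) (f : A ⟶ M) (g : M ⟶ B) (δ : B ⟶ A⟦(1 : ℤ)⟧),
      IsWeightFiltrationAt w n f g δ := by
  obtain ⟨A, B, f, g, δ, hT, hA, hB⟩ := w.exists_decomp (M⟦-(n - 1)⟧)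
  let T := (Triangle.shiftFunctor C (n - 1)).obj (Triangle.mk f g δ)
  let e : T.obj₂ ≅ M := (shiftFunctorCompIsoId C (-(n - 1)) (n - 1) (by omega)).app M
  refine ⟨T.obj₁, T.obj₃, T.mor₁ ≫ e.hom, e.inv ≫ T.mor₂, T.mor₃,
    distinguished_of_iso_obj₂ T (Triangle.shift_distinguished _ hT (n - 1)) e, ?_, ?_⟩
  · exact w.mem_le_of_iso ((shiftFunctorCompIsoId C (n - 1) (-(n - 1)) (by omega)).app A) hA
  · exact w.mem_ge_of_iso ((shiftFunctorAdd' C (n - 1) (-n) (-1) (by omega)).app B).symm hB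

lemma mem_leN_of_distTriang {k : ℤ} {T : Triangle C} (hT : T ∈ distTriang C)
    (h₁ : T.obj₁ ∈ w.leN k) (h₃ : T.obj₃ ∈ w.leN k) : T.obj₂ ∈ w.leN k := by
  obtain ⟨A, B, u, v, δ, hS, hA, hB⟩ := w.exists_isWeightFiltrationAt T.obj₂ (k + 1)
  rw [add_sub_cancel_right] at hA
  have hv : v = 0 := by
    obtain ⟨c, rfl⟩ := Triangle.yoneda_exact₂ T hT v
      (w.hom_eq_zero_of_leN_of_geN (by omega) h₁ hB _)
    rw [w.hom_eq_zero_of_leN_of_geN (by omega) h₃ hB c, comp_zero]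
  obtain ⟨s, hs⟩ := Triangle.coyoneda_exact₂ _ hS (𝟙 T.obj₂)
    ((Category.id_comp _).trans hv)
  exact w.mem_leN_of_retract s u hs.symm hA

lemma mem_geN_of_distTriang {k : ℤ} {T : Triangle C} (hT : T ∈ distTriang C)
    (h₁ : T.obj₁ ∈ w.geN k) (h₃ : T.obj₃ ∈ w.geN k) : T.obj₂ ∈ w.geN k := by
  obtain ⟨A, B, u, v, δ, hS, hA, hB⟩ := w.exists_isWeightFiltrationAt T.obj₂ k
  have hu : u = 0 := by
    obtain ⟨c, rfl⟩ := Triangle.coyoneda_exact₂ T hT u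
      (w.hom_eq_zero_of_leN_of_geN (by omega) hA h₃ _)
    rw [w.hom_eq_zero_of_leN_of_geN (by omega) hA h₁ c, zero_comp]
  obtain ⟨s, hs⟩ := Triangle.yoneda_exact₂ _ hS (𝟙 T.obj₂)
    ((Category.comp_id _).trans hu)
  exact w.mem_geN_of_retract v s hs.symm hB

end WeightStructure

namespace IsWeightFiltrationAt

variable {C : Type*} [Category C] [Preadditive C] [HasZeroObject C] [HasShift C ℤ]
  [∀ n : ℤ, (CategoryTheory.shiftFunctor C n).Additive] [Pretriangulated C]
  {w : WeightStructure C} {n : ℤ} {A M B : C} {f : A ⟶ M} {g : M ⟶ B} {δ : B ⟶ A⟦(1 : ℤ)⟧}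

lemma mem_heartAt₃ (h : IsWeightFiltrationAt w n f g δ) (hM : M ∈ w.leN n) :
    B ∈ w.heartAt n :=
  ⟨w.mem_leN_of_distTriang (rot_of_distTriang _ h.1) hM (w.shift_mem_leN 1 n (by omega) h.2.1),
    h.2.2⟩

lemma mem_heartAt₁ (h : IsWeightFiltrationAt w (n + 1) f g δ) (hM : M ∈ w.geN n) :
    A ∈ w.heartAt n := by
  obtain ⟨hT, hA, hB⟩ := h
  rw [add_sub_cancel_right] at hA
  exact ⟨hA, w.mem_geN_of_distTriang (inv_rot_of_distTriang _ hT)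
    (w.shift_mem_geN (-1) n (by omega) hB) hM⟩

end IsWeightFiltrationAt

def FullOn {C₁ C₂ : Type*} [Category C₁] [Category C₂] (r : C₁ ⥤ C₂) (P : Set C₁) : Prop :=
  ∀ X Y : C₁, X ∈ P → Y ∈ P → ∀ g : r.obj X ⟶ r.obj Y, ∃ f : X ⟶ Y, r.map f = g

def ConservativeOn {C₁ C₂ : Type*} [Category C₁] [Category C₂] (r : C₁ ⥤ C₂) (P : Set C₁) :
    Prop :=
  ∀ X Y : C₁, X ∈ P → Y ∈ P → ∀ f : X ⟶ Y, IsIso (r.map f) → IsIso f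

section Functor

variable {C₁ : Type*} [Category C₁] [Preadditive C₁] [HasZeroObject C₁] [HasShift C₁ ℤ]
  [∀ n : ℤ, (CategoryTheory.shiftFunctor C₁ n).Additive] [Pretriangulated C₁]
  {C₂ : Type*} [Category C₂] [HasShift C₂ ℤ] {w₁ : WeightStructure C₁} {r : C₁ ⥤ C₂}
  [r.CommShift ℤ]

lemma FullOn.exists_map_eq_of_mem_heartAt (hfull : FullOn r w₁.heart) {n : ℤ} {X Y : C₁}
    (hX : X ∈ w₁.heartAt n) (hY : Y ∈ w₁.heartAt n) (g : r.obj X ⟶ r.obj Y) :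
    ∃ f : X ⟶ Y, r.map f = g := by
  obtain ⟨f', hf'⟩ := hfull _ _ (w₁.shift_mem_heart hX) (w₁.shift_mem_heart hY)
    ((r.commShiftIso (-n)).hom.app X ≫ g⟦-n⟧' ≫ (r.commShiftIso (-n)).inv.app Y)
  obtain ⟨f, rfl⟩ := (shiftFunctor C₁ (-n)).map_surjective f'
  refine ⟨f, (shiftFunctor C₂ (-n)).map_injective ?_⟩
  simpa [hf'] using (r.commShiftIso_hom_naturality f (-n)).symm

lemma ConservativeOn.isIso_of_mem_heartAt (hcons : ConservativeOn r w₁.heart) {n : ℤ}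
    {X Y : C₁} (hX : X ∈ w₁.heartAt n) (hY : Y ∈ w₁.heartAt n) (f : X ⟶ Y)
    (hf : IsIso (r.map f)) : IsIso f := by
  have : IsIso (r.map (f⟦-n⟧') ≫ (r.commShiftIso (-n)).hom.app Y) := by
    rw [r.commShiftIso_hom_naturality]
    infer_instance
  have : IsIso (r.map (f⟦-n⟧')) := IsIso.of_isIso_comp_right _ ((r.commShiftIso (-n)).hom.app Y)
  have : IsIso (f⟦-n⟧') :=
    hcons _ _ (w₁.shift_mem_heart hX) (w₁.shift_mem_heart hY) _ this
  exact isIso_of_reflects_iso f (shiftFunctor C₁ (-n))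

end Functor

section TriangulatedFunctor

variable {C₁ : Type*} [Category C₁] [Preadditive C₁] [HasZeroObject C₁] [HasShift C₁ ℤ]
  [∀ n : ℤ, (CategoryTheory.shiftFunctor C₁ n).Additive] [Pretriangulated C₁]
  {C₂ : Type*} [Category C₂] [Preadditive C₂] [HasZeroObject C₂] [HasShift C₂ ℤ]
  [∀ n : ℤ, (CategoryTheory.shiftFunctor C₂ n).Additive] [Pretriangulated C₂]
  {w₁ : WeightStructure C₁} {w₂ : WeightStructure C₂} {r : C₁ ⥤ C₂} [r.CommShift ℤ]

lemma WeightExact.map_mem_leN (hwe : WeightExact w₁ w₂ r) {X : C₁} {k : ℤ}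
    (hX : X ∈ w₁.leN k) : r.obj X ∈ w₂.leN k :=
  w₂.mem_le_of_iso ((r.commShiftIso (-k)).app X).symm (hwe.1 _ hX)

lemma WeightExact.map_mem_geN (hwe : WeightExact w₁ w₂ r) {X : C₁} {k : ℤ}
    (hX : X ∈ w₁.geN k) : r.obj X ∈ w₂.geN k :=
  w₂.mem_ge_of_iso ((r.commShiftIso (-k)).app X).symm (hwe.2 _ hX)

variable [r.IsTriangulated]

lemma FullOn.exists_map_eq_of_mem_leN (hfull : FullOn r w₁.heart) (hwe : WeightExact w₁ w₂ r)
    {n : ℤ} {X Y : C₁} (hX : X ∈ w₁.leN n) (hY : Y ∈ w₁.heartAt n) (g : r.obj X ⟶ r.obj Y) :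
    ∃ f : X ⟶ Y, r.map f = g := by
  obtain ⟨A, B, u, v, δ, hF⟩ := w₁.exists_isWeightFiltrationAt X n
  have hB := hF.mem_heartAt₃ hX
  obtain ⟨hT, hA, -⟩ := hF
  obtain ⟨k, rfl⟩ := Triangle.yoneda_exact₂ _ (r.map_distinguished _ hT) g
    (w₂.hom_eq_zero_of_leN_of_geN (by omega) (hwe.map_mem_leN hA) (hwe.map_mem_geN hY.2) _)
  obtain ⟨k', rfl⟩ := hfull.exists_map_eq_of_mem_heartAt hB hY k
  exact ⟨v ≫ k', r.map_comp _ _⟩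

lemma FullOn.exists_map_eq_of_mem_geN (hfull : FullOn r w₁.heart) (hwe : WeightExact w₁ w₂ r)
    {n : ℤ} {X Y : C₁} (hX : X ∈ w₁.heartAt n) (hY : Y ∈ w₁.geN n) (g : r.obj X ⟶ r.obj Y) :
    ∃ f : X ⟶ Y, r.map f = g := by
  obtain ⟨A, B, u, v, δ, hF⟩ := w₁.exists_isWeightFiltrationAt Y (n + 1)
  have hA := hF.mem_heartAt₁ hY
  obtain ⟨hT, -, hB⟩ := hF
  obtain ⟨k, rfl⟩ := Triangle.coyoneda_exact₂ _ (r.map_distinguished _ hT) g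
    (w₂.hom_eq_zero_of_leN_of_geN (by omega) (hwe.map_mem_leN hX.1) (hwe.map_mem_geN hB) _)
  obtain ⟨k', rfl⟩ := hfull.exists_map_eq_of_mem_heartAt hX hA k
  exact ⟨k' ≫ u, r.map_comp _ _⟩

lemma mem_leN_sub_one_of_map_mem_leN_zero (hfull : FullOn r w₁.heart)
    (hcons : ConservativeOn r w₁.heart) (hwe : WeightExact w₁ w₂ r) {n : ℤ} (hn : 0 < n)
    {M : C₁} (hM : M ∈ w₁.leN n) (hrM : r.obj M ∈ w₂.leN 0) : M ∈ w₁.leN (n - 1) := by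
  obtain ⟨A, B, f, g, δ, hF⟩ := w₁.exists_isWeightFiltrationAt M n
  have hB := hF.mem_heartAt₃ hM
  obtain ⟨hT, hA, -⟩ := hF
  have hrg : r.map g = 0 := w₂.hom_eq_zero_of_leN_of_geN hn hrM (hwe.map_mem_geN hB.2) _
  obtain ⟨ρ, hρ⟩ : ∃ ρ : (r.obj A)⟦(1 : ℤ)⟧ ⟶ r.obj B,
      𝟙 _ = (r.map δ ≫ (r.commShiftIso (1 : ℤ)).hom.app A) ≫ ρ :=
    Triangle.yoneda_exact₃ _ (r.map_distinguished _ hT) (𝟙 _) ((Category.comp_id _).trans hrg)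
  obtain ⟨σ, hσ⟩ := hfull.exists_map_eq_of_mem_leN hwe (w₁.shift_mem_leN 1 n (by omega) hA) hB
    ((r.commShiftIso (1 : ℤ)).hom.app A ≫ ρ)
  have : IsIso (δ ≫ σ) := hcons.isIso_of_mem_heartAt hB hB _ (by
    rw [r.map_comp, hσ, ← Category.assoc, ← hρ]
    infer_instance)
  have hg : g = 0 := Triangle.mor₂_eq_zero_of_mono₃ _ hT (mono_of_mono δ σ)
  obtain ⟨s, hs⟩ := Triangle.coyoneda_exact₂ _ hT (𝟙 M) ((Category.id_comp _).trans hg)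
  exact w₁.mem_leN_of_retract s f hs.symm hA

lemma mem_geN_add_one_of_map_mem_geN_zero (hfull : FullOn r w₁.heart)
    (hcons : ConservativeOn r w₁.heart) (hwe : WeightExact w₁ w₂ r) {n : ℤ} (hn : n < 0)
    {M : C₁} (hM : M ∈ w₁.geN n) (hrM : r.obj M ∈ w₂.geN 0) : M ∈ w₁.geN (n + 1) := by
  obtain ⟨A, B, f, g, δ, hF⟩ := w₁.exists_isWeightFiltrationAt M (n + 1)
  have hA := hF.mem_heartAt₁ hM
  obtain ⟨hT, -, hB⟩ := hF
  have hrf : r.map f = 0 := w₂.hom_eq_zero_of_leN_of_geN hn (hwe.map_mem_leN hA.1) hrM _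
  obtain ⟨ρ, hρ⟩ : ∃ ρ : (r.obj A)⟦(1 : ℤ)⟧ ⟶ r.obj B,
      𝟙 _ = ρ ≫ r.map δ ≫ (r.commShiftIso (1 : ℤ)).hom.app A :=
    Triangle.coyoneda_exact₁ _ (r.map_distinguished _ hT) (𝟙 _)
      ((Category.id_comp _).trans
        ((congrArg (shiftFunctor C₂ (1 : ℤ)).map hrf).trans (Functor.map_zero _ _ _)))
  have hA' : A⟦(1 : ℤ)⟧ ∈ w₁.heartAt (n + 1) :=
    ⟨w₁.shift_mem_leN 1 _ (by omega) hA.1, w₁.shift_mem_geN 1 _ (by omega) hA.2⟩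
  obtain ⟨σ, hσ⟩ := hfull.exists_map_eq_of_mem_geN hwe hA' hB
    ((r.commShiftIso (1 : ℤ)).hom.app A ≫ ρ)
  have : IsIso (σ ≫ δ) := hcons.isIso_of_mem_heartAt hA' hA' _ (by
    rw [r.map_comp, hσ, Category.assoc,
      IsIso.eq_inv_of_inv_hom_id ((Category.assoc _ _ _).trans hρ.symm)]
    infer_instance)
  have hf : f = 0 := Triangle.mor₁_eq_zero_of_epi₃ _ hT (epi_of_epi σ δ)
  obtain ⟨s, hs⟩ := Triangle.yoneda_exact₂ _ hT (𝟙 M) ((Category.comp_id _).trans hf)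
  exact w₁.mem_geN_of_retract g s hs.symm hB

lemma mem_leN_zero_of_map_mem_leN_zero (hfull : FullOn r w₁.heart)
    (hcons : ConservativeOn r w₁.heart) (hwe : WeightExact w₁ w₂ r) {n : ℤ} {M : C₁}
    (hM : M ∈ w₁.leN n) (hrM : r.obj M ∈ w₂.leN 0) : M ∈ w₁.leN 0 := by
  obtain hn | hn := le_total n 0
  · exact w₁.leN_mono hn hM
  induction n, hn using Int.leInduction with
  | base => exact hM
  | succ n hn ih =>
    refine ih ?_
    simpa using mem_leN_sub_one_of_map_mem_leN_zero hfull hcons hwe (by omega) hM hrM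

lemma mem_geN_zero_of_map_mem_geN_zero (hfull : FullOn r w₁.heart)
    (hcons : ConservativeOn r w₁.heart) (hwe : WeightExact w₁ w₂ r) {n : ℤ} {M : C₁}
    (hM : M ∈ w₁.geN n) (hrM : r.obj M ∈ w₂.geN 0) : M ∈ w₁.geN 0 := by
  obtain hn | hn := le_total 0 n
  · exact w₁.geN_anti hn hM
  induction n, hn using Int.leInductionDown with
  | base => exact hM
  | pred n hn ih =>
    refine ih ?_
    simpa using mem_geN_add_one_of_map_mem_geN_zero hfull hcons hwe (by omega) hM hrM

end TriangulatedFunctor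

theorem statement4
    (F : Type*) [Field F] [CharZero F]
    {C₁ : Type*} [Category C₁] [Preadditive C₁] [HasZeroObject C₁] [HasShift C₁ ℤ]
    [∀ n : ℤ, (CategoryTheory.shiftFunctor C₁ n).Additive] [Pretriangulated C₁] [CategoryTheory.Linear F C₁]
    {C₂ : Type*} [Category C₂] [Preadditive C₂] [HasZeroObject C₂] [HasShift C₂ ℤ]
    [∀ n : ℤ, (CategoryTheory.shiftFunctor C₂ n).Additive] [Pretriangulated C₂] [CategoryTheory.Linear F C₂]
    (w₁ : WeightStructure C₁) (w₂ : WeightStructure C₂)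
    (r : C₁ ⥤ C₂) [r.Additive] [Functor.Linear F r] [r.CommShift ℤ] [r.IsTriangulated]
    (hbounded : w₁.Bounded)
    (hsemiprimary : SemiprimaryOn w₁.heart) (hpseudoabelian : PseudoAbelianOn w₁.heart)
    (hwe : WeightExact w₁ w₂ r)
    (hfull : ∀ X Y : C₁, X ∈ w₁.heart → Y ∈ w₁.heart →
      ∀ g : r.obj X ⟶ r.obj Y, ∃ f : X ⟶ Y, r.map f = g)
    (hcons : ∀ X Y : C₁, X ∈ w₁.heart → Y ∈ w₁.heart →
      ∀ f : X ⟶ Y, IsIso (r.map f) → IsIso f)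
    (M : C₁) :
    M ∈ w₁.heart ↔ r.obj M ∈ w₂.heart := by
  refine ⟨fun hM => ⟨hwe.map_mem_leN hM.1, hwe.map_mem_geN hM.2⟩, fun hrM => ?_⟩
  obtain ⟨m, n, -, hm, hn⟩ := hbounded M
  exact ⟨mem_leN_zero_of_map_mem_leN_zero hfull hcons hwe hn hrM.1,
    mem_geN_zero_of_map_mem_geN_zero hfull hcons hwe hm hrM.2⟩

end Paper
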